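/- Let Δ be a flag (d-1)-dimensional minimal cycle (e.g., a flag triangulation of a closed connected (d-1)-manifold, or a flag (d-1)-pseudomanifold). Then the 1-skeleton of Δ is (2d-2)-connected. -/

import Mathlib

open Finset

/-- An abstract simplicial complex on a finite linearly ordered vertex set `V`
(containing the empty face). -/
structure SComplex (V : Type) [Fintype V] [LinearOrder V] where
  faces : Set (Finset V)
  empty_mem : (∅ : Finset V) ∈ faces
  down_closed : ∀ ⦃F G : Finset V⦄, F ∈ faces → G ⊆ F → G ∈ faces

namespace SComplex

variable {V : Type} [Fintype V] [LinearOrder V]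

/-- Faces of cardinality `j`. -/
def simplex (K : SComplex V) (j : ℕ) := {F : Finset V // F ∈ K.faces ∧ F.card = j}

/-- Simplicial chains supported on faces of cardinality `j` (so `j = n + 1` gives the
`n`-dimensional chains, and `j = 0` corresponds to the empty face, yielding
*reduced* homology below). -/
abbrev chains (R : Type) [CommRing R] (K : SComplex V) (j : ℕ) := K.simplex j →₀ R

/-- The simplicial boundary map, from chains on faces of cardinality `j + 1`
to chains on faces of cardinality `j`. -/
noncomputable def bdry (R : Type) [CommRing R] (K : SComplex V) (j : ℕ) :
    K.chains R (j + 1) →ₗ[R] K.chains R j :=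
  Finsupp.lsum R fun s => LinearMap.toSpanSingleton R _
    (∑ v ∈ s.1.attach, ((-1 : R) ^ ((s.1.filter (· < v.1)).card)) •
      Finsupp.single (⟨s.1.erase v.1, K.down_closed s.2.1 (Finset.erase_subset _ _),
        by simp [Finset.card_erase_of_mem v.2, s.2.2]⟩ : K.simplex j) (1 : R))

/-- Reduced `n`-cycles (chains on faces of cardinality `n + 1` with zero boundary). -/
noncomputable def cycles (R : Type) [CommRing R] (K : SComplex V) (n : ℕ) :
    Submodule R (K.chains R (n + 1)) := LinearMap.ker (K.bdry R n)

/-- Reduced `n`-boundaries. -/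
noncomputable def bdries (R : Type) [CommRing R] (K : SComplex V) (n : ℕ) :
    Submodule R (K.chains R (n + 1)) := LinearMap.range (K.bdry R (n + 1))

/-- Reduced simplicial homology of `K` in dimension `n` with coefficients in `R`,
realized as the image of the cycles in the chains modulo the boundaries. -/
noncomputable abbrev Hred (R : Type) [CommRing R] (K : SComplex V) (n : ℕ) :=
  ↥(Submodule.map (K.bdries R n).mkQ (K.cycles R n))

/-- The induced subcomplex on a vertex subset `W`. -/
def induced (K : SComplex V) (W : Finset V) : SComplex V where
  faces := {F | F ∈ K.faces ∧ F ⊆ W}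
  empty_mem := ⟨K.empty_mem, Finset.empty_subset _⟩
  down_closed := fun _ _ hF hG => ⟨K.down_closed hF.1 hG, hG.trans hF.2⟩

/-- The underlying graph (1-skeleton) of a simplicial complex. -/
def skeleton (K : SComplex V) : SimpleGraph V where
  Adj u v := u ≠ v ∧ ({u, v} : Finset V) ∈ K.faces
  symm := ⟨by
    intro u v h
    refine ⟨h.1.symm, ?_⟩
    rw [Finset.pair_comm]
    exact h.2⟩
  loopless := ⟨fun v h => h.1 rfl⟩

/-- The vertex set of a simplicial complex. -/
def vertexSet (K : SComplex V) : Set V := {v | {v} ∈ K.faces}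

/-- A set of vertices is complete if its elements are pairwise adjacent. -/
def IsComplete (K : SComplex V) (W : Finset V) : Prop :=
  ∀ u ∈ W, ∀ v ∈ W, u ≠ v → ({u, v} : Finset V) ∈ K.faces

/-- A complex is flag if it is the clique complex of its 1-skeleton. -/
def IsFlag (K : SComplex V) : Prop := ∀ W : Finset V, K.IsComplete W → W ∈ K.faces

/-- One plus the dimension of `K`: the maximal cardinality of a face. -/
noncomputable def dimP1 (K : SComplex V) : ℕ := sSup {j | ∃ F ∈ K.faces, F.card = j}

/-- `K` is pure, with all facets of cardinality `d`. -/
def Pure (K : SComplex V) (d : ℕ) : Prop :=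
  ∀ F ∈ K.faces, ∃ G ∈ K.faces, F ⊆ G ∧ G.card = d

/-- `K` is a minimal `n`-cycle over `R`: it is pure `n`-dimensional and supports
precisely one homology `n`-class (up to scalars), whose support is all of `K`. -/
def IsMinimalCycle (R : Type) [CommRing R] (K : SComplex V) (n : ℕ) : Prop :=
  K.dimP1 = n + 1 ∧ K.Pure (n + 1) ∧
    ∃ ζ ∈ K.cycles R n, (∀ s : K.simplex (n + 1), ζ s ≠ 0) ∧
      ∀ z ∈ K.cycles R n, ∃ c : R, z = c • ζ

end SComplex

/-- Graded Betti numbers of the Stanley–Reisner ring of `K` over `k`, via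
Hochster's formula: `b_{i,j} = ∑_{#W = j} dim_k H̃_{j-i-1}(K_W)`. -/
noncomputable def bettiH (k : Type) [Field k] {V : Type} [Fintype V] [LinearOrder V]
    (K : SComplex V) (i j : ℕ) : ℕ :=
  ∑ W ∈ Finset.powersetCard j (Finset.univ : Finset V),
    Module.finrank k (SComplex.Hred k (K.induced W) (j - i - 1))

/-- A graph is `m`-connected if it has at least `m` vertices and removing
any set of fewer than `m` vertices leaves a connected graph. -/
def KConn {V : Type} [Fintype V] (G : SimpleGraph V) (m : ℕ) : Prop :=
  m ≤ Fintype.card V ∧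
    ∀ S : Finset V, S.card < m → (SimpleGraph.induce ((↑S : Set V)ᶜ) G).Connected

/-- The vertex connectivity of a graph: the largest `m` such that it is `m`-connected. -/
noncomputable def connectivity {V : Type} [Fintype V] (G : SimpleGraph V) : ℕ :=
  sSup {m | KConn G m}


/-!
The core is a flag analogue of the cross-polytope bound: a `j`-cycle supported on a vertex
set `W` that does not bound on `W` forces `#W ≥ 2j + 2`. Induct on `#W`. Pick a vertex `v`
of the cycle `z` and let `N` be its neighbours in `W`; the link of `v` in `z` is a
`(j-1)`-cycle on `N`. If it bounds a chain `w` on `N`, then `z + ∂(cone v w)` is a non-bounding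
cycle on `W \ {v}`, and induction gives `#W - 1 ≥ 2j + 2`. Otherwise induction gives
`#N ≥ 2j`, and `W ≠ {v} ∪ N`: by flagness every cycle in the closed star of `v` is the
boundary of its cone. Hence `#W ≥ #N + 2`.

For the theorem, let `ζ` be the fundamental `(d-1)`-cycle. If removing a vertex set `S`
separates `a` from `b`, restrict `ζ` to the facets meeting the component `A` of `a`. The
boundary of this restriction is a `(d-2)`-cycle supported on `S`. It cannot bound on `S`:
otherwise the restriction minus a chain on `S` would be a cycle vanishing on a facet through
`b` but not on a facet through `a`, so it is not a multiple of `ζ`. Hence `#S ≥ 2d - 2`, and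
`ζ` itself, on all vertices, gives at least `2d` vertices.
-/

noncomputable section

open scoped Classical

namespace SComplex

section Incidence

variable {V : Type} [LinearOrder V] (R : Type) [CommRing R]

/-- The sign of the face `A` in the boundary of `insert x A`, as in `bdry`. -/
def incidence (A : Finset V) (x : V) : R := (-1) ^ #{y ∈ A | y < x}

variable {R}

lemma incidence_mul_self (A : Finset V) (x : V) : incidence R A x * incidence R A x = 1 := by
  rw [incidence, ← pow_add]
  exact Even.neg_one_pow ⟨_, rfl⟩

lemma incidence_insert {A : Finset V} {y : V} (hy : y ∉ A) (x : V) :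
    incidence R (insert y A) x = (if y < x then -1 else 1) * incidence R A x := by
  rw [incidence, incidence, filter_insert]
  split_ifs with h
  · rw [card_insert_of_notMem (by simp [hy]), pow_succ, mul_comm]
  · rw [one_mul]

lemma incidence_erase (A : Finset V) (x : V) : incidence R (A.erase x) x = incidence R A x := by
  rw [incidence, incidence, filter_erase, erase_eq_of_notMem (by simp)]

lemma incidence_mul_incidence_insert_swap {ρ : Finset V} {x y : V} (hx : x ∉ ρ) (hy : y ∉ ρ)
    (hxy : x ≠ y) :
    incidence R ρ x * incidence R (insert x ρ) y =
      -(incidence R ρ y * incidence R (insert y ρ) x) := by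
  rw [incidence_insert hx, incidence_insert hy]
  rcases hxy.lt_or_gt with h | h
  · simp [h, h.not_gt]; ring
  · simp [h, h.not_gt]; ring

lemma incidence_insert_mul_incidence_insert {ρ : Finset V} {v x : V} (hv : v ∉ ρ) (hx : x ∉ ρ)
    (hxv : x ≠ v) :
    incidence R (insert v ρ) x * incidence R (insert x ρ) v =
      -(incidence R ρ v * incidence R ρ x) := by
  rw [incidence_insert hv, incidence_insert hx]
  rcases hxv.lt_or_gt with h | h
  · simp [h, h.not_gt]; ring
  · simp [h, h.not_gt]; ring

end Incidence

variable {V : Type} [Fintype V] [LinearOrder V] {R : Type} [CommRing R] {K : SComplex V}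
  {j : ℕ}

instance (K : SComplex V) (j : ℕ) : Finite (K.simplex j) := by
  unfold simplex; infer_instance

/-- Chains are read as functions on all finsets, vanishing off the faces of the right size, so
that the formulas below can speak of `insert x F` without proofs that it is a face. -/
def coeff (z : K.chains R j) (F : Finset V) : R :=
  if h : F ∈ K.faces ∧ F.card = j then z ⟨F, h⟩ else 0

def chainOfFun (f : Finset V → R) : K.chains R j :=
  Finsupp.equivFunOnFinite.symm fun s => f s.1

lemma coeff_val (z : K.chains R j) (s : K.simplex j) : coeff z s.1 = z s := dif_pos s.2

lemma chains_ext {z w : K.chains R j} (h : ∀ F, coeff z F = coeff w F) : z = w := by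
  ext s
  rw [← coeff_val, ← coeff_val, h]

lemma coeff_eq_zero_of_notMem_faces (z : K.chains R j) {F : Finset V} (hF : F ∉ K.faces) :
    coeff z F = 0 :=
  dif_neg fun h => hF h.1

lemma coeff_eq_zero_of_card_ne (z : K.chains R j) {F : Finset V} (hF : F.card ≠ j) :
    coeff z F = 0 :=
  dif_neg fun h => hF h.2

lemma mem_faces_of_coeff_ne_zero {z : K.chains R j} {F : Finset V} (h : coeff z F ≠ 0) :
    F ∈ K.faces :=
  not_not.mp fun hF => h (coeff_eq_zero_of_notMem_faces z hF)

lemma card_eq_of_coeff_ne_zero {z : K.chains R j} {F : Finset V} (h : coeff z F ≠ 0) :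
    F.card = j :=
  not_not.mp fun hF => h (coeff_eq_zero_of_card_ne z hF)

@[simp]
lemma coeff_zero (F : Finset V) : coeff (0 : K.chains R j) F = 0 := by
  unfold coeff; split_ifs <;> rfl

lemma exists_coeff_ne_zero {z : K.chains R j} (hz : z ≠ 0) : ∃ F, coeff z F ≠ 0 := by
  by_contra! h
  exact hz (chains_ext fun F => by rw [h, coeff_zero])

@[simp]
lemma coeff_add (z w : K.chains R j) (F : Finset V) :
    coeff (z + w) F = coeff z F + coeff w F := by
  unfold coeff; split_ifs <;> first | rfl | simp

@[simp]
lemma coeff_sub (z w : K.chains R j) (F : Finset V) :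
    coeff (z - w) F = coeff z F - coeff w F := by
  unfold coeff; split_ifs <;> first | rfl | simp

@[simp]
lemma coeff_neg (z : K.chains R j) (F : Finset V) : coeff (-z) F = -coeff z F := by
  unfold coeff; split_ifs <;> first | rfl | simp

@[simp]
lemma coeff_smul (c : R) (z : K.chains R j) (F : Finset V) :
    coeff (c • z) F = c * coeff z F := by
  unfold coeff; split_ifs <;> first | rfl | simp

lemma coeff_single (s : K.simplex j) (r : R) (F : Finset V) :
    coeff (Finsupp.single s r) F = if F = s.1 then r else 0 := by
  split_ifs with h
  · rw [h, coeff_val, Finsupp.single_eq_same]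
  · unfold coeff
    split_ifs with hF
    · exact Finsupp.single_eq_of_ne fun hs => h (congrArg Subtype.val hs)
    · rfl

lemma coeff_chainOfFun (f : Finset V → R) (F : Finset V) :
    coeff (chainOfFun f : K.chains R j) F = if F ∈ K.faces ∧ F.card = j then f F else 0 := by
  unfold coeff chainOfFun
  split_ifs <;> simp

lemma bdry_single_apply (s : K.simplex (j + 1)) (r : R) (τ : K.simplex j) :
    K.bdry R j (Finsupp.single s r) τ =
      ∑ x ∈ τ.1ᶜ, incidence R τ.1 x * coeff (Finsupp.single s r) (insert x τ.1) := by
  rw [bdry, Finsupp.lsum_single, LinearMap.toSpanSingleton_apply]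
  -- `simplex` is not reducible, so the subtypes in `bdry` only match `chains` up to unfolding.
  erw [Finsupp.smul_apply, Finsupp.finsetSum_apply, Finset.smul_sum]
  have hterm : ∀ v : s.1, r • ((incidence R s.1 v • Finsupp.single
      (⟨s.1.erase v, K.down_closed s.2.1 (erase_subset _ _),
        by simp [card_erase_of_mem v.2, s.2.2]⟩ : K.simplex j) (1 : R)) τ) =
      if s.1.erase v = τ.1 then incidence R τ.1 v * r else 0 := by
    intro v
    erw [Finsupp.smul_apply, Finsupp.single_apply]
    split_ifs with h₁ h₂ h₂
    · rw [← h₂, incidence_erase, smul_eq_mul, smul_eq_mul, mul_one, mul_comm]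
    · exact absurd (congrArg Subtype.val h₁) h₂
    · exact absurd (Subtype.ext h₂) h₁
    · rw [smul_zero, smul_zero]
  erw [Finset.sum_congr rfl fun v _ => hterm v]
  rw [sum_attach s.1 fun v => if s.1.erase v = τ.1 then incidence R τ.1 v * r else 0,
    ← sum_filter]
  simp only [coeff_single, mul_ite, mul_zero, ← sum_filter]
  refine sum_congr ?_ fun _ _ => rfl
  ext x
  simp only [mem_filter, mem_compl]
  constructor
  · rintro ⟨hx, h⟩
    exact ⟨h ▸ notMem_erase _ _, h ▸ insert_erase hx⟩
  · rintro ⟨hx, h⟩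
    exact ⟨h ▸ mem_insert_self _ _, h ▸ erase_insert hx⟩

lemma bdry_apply (z : K.chains R (j + 1)) (τ : K.simplex j) :
    K.bdry R j z τ = ∑ x ∈ τ.1ᶜ, incidence R τ.1 x * coeff z (insert x τ.1) := by
  induction z using Finsupp.induction_linear with
  | zero => simp
  | add f g hf hg =>
    simp only [map_add, Finsupp.add_apply, hf, hg, coeff_add, mul_add, sum_add_distrib]
  | single s r => exact bdry_single_apply s r τ

lemma coeff_bdry (z : K.chains R (j + 1)) (F : Finset V) :
    coeff (K.bdry R j z) F = ∑ x ∈ Fᶜ, incidence R F x * coeff z (insert x F) := by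
  by_cases hF : F ∈ K.faces ∧ F.card = j
  · exact (coeff_val _ ⟨F, hF⟩).trans (bdry_apply z ⟨F, hF⟩)
  · refine (dif_neg hF).trans (sum_eq_zero fun x hx => ?_).symm
    have hxF : ¬(insert x F ∈ K.faces ∧ (insert x F).card = j + 1) := fun h =>
      hF ⟨K.down_closed h.1 (subset_insert _ _), by
        rw [card_insert_of_notMem (mem_compl.1 hx)] at h; omega⟩
    rw [coeff, dif_neg hxF, mul_zero]

lemma bdry_bdry (u : K.chains R (j + 2)) : K.bdry R j (K.bdry R (j + 1) u) = 0 := by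
  refine chains_ext fun F => ?_
  rw [coeff_zero]
  by_cases hF : F.card = j
  swap
  · exact coeff_eq_zero_of_card_ne _ hF
  set g : V × V → R := fun p =>
    incidence R F p.1 * (incidence R (insert p.1 F) p.2 * coeff u (insert p.2 (insert p.1 F)))
  have hdiag : ∀ x, g (x, x) = 0 := fun x => by
    refine mul_eq_zero_of_right _ (mul_eq_zero_of_right _ (coeff_eq_zero_of_card_ne _ ?_))
    have := card_insert_le x F
    dsimp only
    rw [insert_idem]
    omega
  have hswap : ∀ x ∈ Fᶜ, ∀ y ∈ Fᶜ, g (x, y) + g (y, x) = 0 := by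
    intro x hx y hy
    rcases eq_or_ne x y with rfl | hxy
    · rw [hdiag, add_zero]
    · simp only [g, ← mul_assoc, insert_comm y x,
        incidence_mul_incidence_insert_swap (mem_compl.1 hx) (mem_compl.1 hy) hxy]
      ring
  calc coeff (K.bdry R j (K.bdry R (j + 1) u)) F
      = ∑ x ∈ Fᶜ, ∑ y ∈ Fᶜ, g (x, y) := by
        simp only [coeff_bdry, mul_sum, compl_insert]
        exact sum_congr rfl fun x _ => sum_erase _ (hdiag x)
    _ = ∑ p ∈ Fᶜ ×ˢ Fᶜ, g p := (sum_product _ _ _).symm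
    _ = 0 := by
        refine sum_involution (fun p _ => p.swap) (fun p hp => ?_) (fun p _ hp => ?_)
          (fun p hp => mem_product.2 ⟨(mem_product.1 hp).2, (mem_product.1 hp).1⟩)
          (fun p _ => p.swap_swap)
        · exact hswap _ (mem_product.1 hp).1 _ (mem_product.1 hp).2
        · rintro h
          obtain ⟨x, y⟩ := p
          obtain rfl : y = x := congrArg Prod.fst h
          exact hp (hdiag y)

lemma mem_cycles {z : K.chains R (j + 1)} : z ∈ K.cycles R j ↔ K.bdry R j z = 0 :=
  LinearMap.mem_ker

variable (R K j) in
def chainsOn (W : Finset V) : Submodule R (K.chains R j) :=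
  Finsupp.supported R R {s | s.1 ⊆ W}

lemma mem_chainsOn {z : K.chains R j} {W : Finset V} :
    z ∈ K.chainsOn R j W ↔ ∀ F, coeff z F ≠ 0 → F ⊆ W := by
  rw [chainsOn, Finsupp.mem_supported']
  constructor
  · intro h F hF
    by_contra hFW
    unfold coeff at hF
    split_ifs at hF with hFK
    · exact hF (h ⟨F, hFK⟩ hFW)
    · exact hF rfl
  · intro h s hs
    by_contra hne
    exact hs (h s.1 (by rwa [coeff_val]))

lemma chainsOn_mono {W W' : Finset V} (h : W ⊆ W') : K.chainsOn R j W ≤ K.chainsOn R j W' :=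
  Finsupp.supported_mono fun _ hs => Set.mem_ofPred.2 (subset_trans hs h)

lemma bdry_mem_chainsOn {z : K.chains R (j + 1)} {W : Finset V}
    (hz : z ∈ K.chainsOn R (j + 1) W) : K.bdry R j z ∈ K.chainsOn R j W := by
  rw [mem_chainsOn] at hz ⊢
  intro F hF
  rw [coeff_bdry] at hF
  obtain ⟨x, -, hx⟩ := exists_ne_zero_of_sum_ne_zero hF
  exact (subset_insert x F).trans (hz _ (right_ne_zero_of_mul hx))

lemma add_bdry_notMem_map_bdry {W W' : Finset V} (hW : W' ⊆ W) {z : K.chains R (j + 1)}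
    (hz : z ∉ (K.chainsOn R (j + 2) W).map (K.bdry R (j + 1))) {y : K.chains R (j + 2)}
    (hy : y ∈ K.chainsOn R (j + 2) W) :
    z + K.bdry R (j + 1) y ∉ (K.chainsOn R (j + 2) W').map (K.bdry R (j + 1)) := by
  rintro ⟨u, hu, hbu⟩
  refine hz ⟨u - y, sub_mem (chainsOn_mono hW hu) hy, ?_⟩
  rw [map_sub, hbu, add_sub_cancel_right]

def cone (v : V) (w : K.chains R j) : K.chains R (j + 1) :=
  chainOfFun fun F => if v ∈ F then incidence R (F.erase v) v * coeff w (F.erase v) else 0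

def link (v : V) (z : K.chains R (j + 1)) : K.chains R j :=
  chainOfFun fun F => if v ∈ F then 0 else incidence R F v * coeff z (insert v F)

lemma coeff_cone (v : V) (w : K.chains R j) (F : Finset V) :
    coeff (cone v w) F =
      if F ∈ K.faces ∧ v ∈ F then incidence R (F.erase v) v * coeff w (F.erase v) else 0 := by
  rw [cone, coeff_chainOfFun]
  by_cases hF : F ∈ K.faces ∧ v ∈ F
  · rw [if_pos hF]
    by_cases hc : F.card = j + 1
    · rw [if_pos ⟨hF.1, hc⟩, if_pos hF.2]
    · rw [if_neg fun h => hc h.2, coeff_eq_zero_of_card_ne, mul_zero]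
      have := card_pos.2 ⟨v, hF.2⟩
      rw [card_erase_of_mem hF.2]
      omega
  · rw [if_neg hF]
    split_ifs with h h'
    · exact absurd ⟨h.1, h'⟩ hF
    · rfl
    · rfl

lemma coeff_link (v : V) (z : K.chains R (j + 1)) (F : Finset V) :
    coeff (link v z) F = if v ∈ F then 0 else incidence R F v * coeff z (insert v F) := by
  rw [link, coeff_chainOfFun]
  split_ifs with hF hv hv
  · rfl
  · rfl
  · rfl
  · refine (mul_eq_zero_of_right _ (dif_neg fun h =>
      hF ⟨K.down_closed h.1 (subset_insert _ _), ?_⟩)).symm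
    rw [card_insert_of_notMem hv] at h
    exact Nat.add_right_cancel h.2

lemma cone_zero (v : V) : cone v (0 : K.chains R j) = 0 :=
  chains_ext fun F => by simp [coeff_cone]

lemma link_zero (v : V) : link v (0 : K.chains R (j + 1)) = 0 :=
  chains_ext fun F => by simp [coeff_link]

lemma coeff_cone_link (v : V) (z : K.chains R (j + 1)) (F : Finset V) :
    coeff (cone v (link v z)) F = if v ∈ F then coeff z F else 0 := by
  rw [coeff_cone, coeff_link]
  by_cases hv : v ∈ F
  · by_cases hF : F ∈ K.faces
    · rw [if_pos ⟨hF, hv⟩, if_pos hv, if_neg (notMem_erase v F), insert_erase hv, ← mul_assoc,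
        incidence_mul_self, one_mul]
    · rw [if_neg fun h => hF h.1, if_pos hv, coeff_eq_zero_of_notMem_faces _ hF]
  · rw [if_neg fun h => hv h.2, if_neg hv]

lemma bdry_link (v : V) (z : K.chains R (j + 2)) :
    K.bdry R j (link v z) = -link v (K.bdry R (j + 1) z) := by
  refine chains_ext fun F => ?_
  rw [coeff_neg, coeff_link, coeff_bdry, coeff_bdry]
  simp only [coeff_link]
  by_cases hv : v ∈ F
  · rw [if_pos hv, neg_zero]
    exact sum_eq_zero fun x _ => by rw [if_pos (mem_insert_of_mem hv), mul_zero]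
  · rw [if_neg hv, ← sum_erase _ (by rw [if_pos (mem_insert_self v F), mul_zero]), compl_insert,
      mul_sum, ← sum_neg_distrib]
    refine sum_congr rfl fun x hx => ?_
    obtain ⟨hxv, hxF⟩ : x ≠ v ∧ x ∉ F := by simpa using hx
    rw [if_neg (by simp [hv, hxv.symm]), insert_comm, ← mul_assoc, ← mul_assoc,
      incidence_mul_incidence_insert_swap hxF hv hxv]
    ring

lemma incidence_mul_coeff_cone_insert {v x : V} {w : K.chains R j}
    (hw : ∀ F, coeff w F ≠ 0 → insert v F ∈ K.faces) {F : Finset V} (hv : v ∈ F)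
    (hx : x ∉ F) :
    incidence R F x * coeff (cone v w) (insert x F) =
      -(incidence R (F.erase v) v *
        (incidence R (F.erase v) x * coeff w (insert x (F.erase v)))) := by
  have hxv : x ≠ v := fun h => hx (h ▸ hv)
  have hFv : insert v (F.erase v) = F := insert_erase hv
  rw [coeff_cone, erase_insert_of_ne hxv]
  by_cases hxF : insert x F ∈ K.faces
  · rw [if_pos ⟨hxF, mem_insert_of_mem hv⟩, ← mul_assoc,
      show incidence R F x = incidence R (insert v (F.erase v)) x by rw [hFv],
      incidence_insert_mul_incidence_insert (notMem_erase v F)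
        (fun h => hx (mem_of_mem_erase h)) hxv]
    ring
  · have hw0 : coeff w (insert x (F.erase v)) = 0 :=
      by_contra fun h => hxF (by have := hw _ h; rwa [insert_comm, hFv] at this)
    rw [if_neg fun h => hxF h.1, hw0, mul_zero, mul_zero, mul_zero, neg_zero]

lemma bdry_cone_add_cone_bdry (v : V) (w : K.chains R (j + 1))
    (hw : ∀ F, coeff w F ≠ 0 → insert v F ∈ K.faces) :
    K.bdry R (j + 1) (cone v w) + cone v (K.bdry R j w) = w := by
  have hw' : ∀ F, insert v F ∉ K.faces → coeff w F = 0 := fun F hF =>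
    by_contra fun h => hF (hw F h)
  refine chains_ext fun F => ?_
  rw [coeff_add, coeff_bdry, coeff_cone]
  by_cases hv : v ∈ F
  · by_cases hF : F ∈ K.faces
    · rw [sum_congr rfl fun x hx => incidence_mul_coeff_cone_insert hw hv (mem_compl.1 hx),
        if_pos ⟨hF, hv⟩, coeff_bdry, compl_erase, sum_insert (by simpa using hv),
        insert_erase hv, sum_neg_distrib, mul_add, ← mul_assoc, incidence_mul_self, one_mul,
        mul_sum]
      abel
    · rw [if_neg fun h => hF h.1, add_zero, coeff_eq_zero_of_notMem_faces _ hF]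
      refine sum_eq_zero fun x _ => ?_
      rw [coeff_eq_zero_of_notMem_faces _ fun h => hF (K.down_closed h (subset_insert _ _)),
        mul_zero]
  · rw [if_neg fun h => hv h.2, add_zero, sum_eq_single_of_mem v (by simpa using hv)]
    · rw [coeff_cone, erase_insert hv]
      by_cases hF : insert v F ∈ K.faces
      · rw [if_pos ⟨hF, mem_insert_self _ _⟩, ← mul_assoc, incidence_mul_self, one_mul]
      · rw [if_neg fun h => hF h.1, mul_zero, hw' F hF]
    · intro x _ hxv
      rw [coeff_cone, if_neg fun h => (mem_insert.1 h.2).elim (fun e => hxv e.symm) hv,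
        mul_zero]

lemma bdry_cone_of_bdry_eq_zero {v : V} {z : K.chains R (j + 1)} (hz : K.bdry R j z = 0)
    (hstar : ∀ F, coeff z F ≠ 0 → insert v F ∈ K.faces) : K.bdry R (j + 1) (cone v z) = z := by
  simpa [hz, cone_zero] using bdry_cone_add_cone_bdry v z hstar

lemma cone_mem_chainsOn {w : K.chains R j} {W : Finset V} (hw : w ∈ K.chainsOn R j W) (v : V) :
    cone v w ∈ K.chainsOn R (j + 1) (insert v W) := by
  rw [mem_chainsOn] at hw ⊢
  intro F hF
  rw [coeff_cone] at hF
  split_ifs at hF with h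
  · rw [← insert_erase h.2]
    exact insert_subset_insert v (hw _ (right_ne_zero_of_mul hF))
  · exact absurd rfl hF

lemma link_mem_chainsOn {z : K.chains R (j + 1)} {W : Finset V}
    (hz : z ∈ K.chainsOn R (j + 1) W) (v : V) :
    link v z ∈ K.chainsOn R j {x ∈ W | K.skeleton.Adj v x} := by
  rw [mem_chainsOn] at hz ⊢
  intro F hF
  rw [coeff_link] at hF
  split_ifs at hF with hv
  · exact absurd rfl hF
  have h := right_ne_zero_of_mul hF
  intro x hx
  refine mem_filter.2 ⟨hz _ h (mem_insert_of_mem hx), fun e => hv (e ▸ hx), ?_⟩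
  exact K.down_closed (mem_faces_of_coeff_ne_zero h)
    (insert_subset (mem_insert_self _ _) (singleton_subset_iff.2 (mem_insert_of_mem hx)))

lemma IsFlag.insert_mem_faces (hflag : K.IsFlag) {F : Finset V} (hF : F ∈ K.faces) {v : V}
    (hadj : ∀ x ∈ F, x ≠ v → K.skeleton.Adj v x) : insert v F ∈ K.faces := by
  refine hflag _ fun a ha b hb hab => ?_
  rcases mem_insert.1 ha with rfl | haF <;> rcases mem_insert.1 hb with rfl | hbF
  · exact absurd rfl hab
  · exact (hadj b hbF hab.symm).2
  · rw [pair_comm]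
    exact (hadj a haF hab).2
  · exact K.down_closed hF (insert_subset haF (singleton_subset_iff.2 hbF))

lemma IsFlag.singleton_mem_faces (hflag : K.IsFlag) (v : V) : {v} ∈ K.faces := by
  simpa using hflag.insert_mem_faces K.empty_mem (v := v) (by simp)

lemma IsFlag.insert_mem_faces_of_mem_chainsOn (hflag : K.IsFlag) {v : V} {N : Finset V}
    (hN : ∀ x ∈ N, x ≠ v → K.skeleton.Adj v x) {w : K.chains R j}
    (hw : w ∈ K.chainsOn R j N) (F : Finset V) (hF : coeff w F ≠ 0) : insert v F ∈ K.faces :=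
  hflag.insert_mem_faces (mem_faces_of_coeff_ne_zero hF)
    fun x hx => hN x (mem_chainsOn.1 hw F hF hx)

lemma IsFlag.mem_map_bdry_of_subset_insert (hflag : K.IsFlag) {W : Finset V} {v : V}
    (hv : v ∈ W) (hW : W ⊆ insert v {x ∈ W | K.skeleton.Adj v x}) {z : K.chains R (j + 1)}
    (hz : z ∈ K.cycles R j) (hzW : z ∈ K.chainsOn R (j + 1) W) :
    z ∈ (K.chainsOn R (j + 2) W).map (K.bdry R (j + 1)) := by
  refine ⟨cone v z, ?_, bdry_cone_of_bdry_eq_zero (mem_cycles.1 hz) ?_⟩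
  · simpa [insert_eq_of_mem hv] using cone_mem_chainsOn hzW v
  · refine hflag.insert_mem_faces_of_mem_chainsOn (fun x hx hxv => ?_) (chainsOn_mono hW hzW)
    exact (mem_filter.1 ((mem_insert.1 hx).resolve_left hxv)).2

lemma IsFlag.add_bdry_cone_mem_chainsOn_erase (hflag : K.IsFlag) {W : Finset V} {v : V}
    (hv : v ∈ W) {z w : K.chains R (j + 1)} (hzW : z ∈ K.chainsOn R (j + 1) W)
    (hw : w ∈ K.chainsOn R (j + 1) {x ∈ W | K.skeleton.Adj v x})
    (hbw : K.bdry R j w = link v z) :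
    z + K.bdry R (j + 1) (cone v w) ∈ K.chainsOn R (j + 1) (W.erase v) := by
  have hcone : K.bdry R (j + 1) (cone v w) = w - cone v (link v z) := by
    rw [← hbw, eq_sub_iff_add_eq]
    exact bdry_cone_add_cone_bdry v w
      (hflag.insert_mem_faces_of_mem_chainsOn (fun x hx _ => (mem_filter.1 hx).2) hw)
  have hW : z + K.bdry R (j + 1) (cone v w) ∈ K.chainsOn R (j + 1) W :=
    add_mem hzW (bdry_mem_chainsOn (chainsOn_mono (insert_subset hv (filter_subset _ _))
      (cone_mem_chainsOn hw v)))
  rw [mem_chainsOn] at hW ⊢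
  intro F hF
  refine subset_erase.2 ⟨hW F hF, fun hvF => hF ?_⟩
  have hwF : coeff w F = 0 :=
    by_contra fun h => ((mem_filter.1 (mem_chainsOn.1 hw F h hvF)).2).ne rfl
  rw [hcone, coeff_add, coeff_sub, coeff_cone_link, if_pos hvF, hwF]
  ring

lemma two_le_card_of_mem_cycles_zero {z : K.chains R 1} {W : Finset V}
    (hz : z ∈ K.cycles R 0) (hzW : z ∈ K.chainsOn R 1 W) (hz0 : z ≠ 0) : 2 ≤ W.card := by
  obtain ⟨F, hF⟩ := exists_coeff_ne_zero hz0
  obtain ⟨x, rfl⟩ := card_eq_one.1 (card_eq_of_coeff_ne_zero hF)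
  have hxW : x ∈ W := mem_chainsOn.1 hzW _ hF (mem_singleton_self x)
  by_contra! hW
  have haug : coeff (K.bdry R 0 z) ∅ = 0 := by rw [mem_cycles.1 hz, coeff_zero]
  rw [coeff_bdry, sum_eq_single_of_mem x (by simp) fun y _ hyx => ?_] at haug
  · exact hF (by simpa [incidence] using haug)
  · by_contra h
    have hyW : y ∈ W := mem_chainsOn.1 hzW _ (right_ne_zero_of_mul h) (mem_insert_self y ∅)
    exact hyx (card_le_one.1 (by omega) y hyW x hxW)

theorem IsFlag.two_mul_add_two_le_card_of_notMem_map_bdry (hflag : K.IsFlag) {W : Finset V}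
    {z : K.chains R (j + 1)} (hz : z ∈ K.cycles R j) (hzW : z ∈ K.chainsOn R (j + 1) W)
    (hnb : z ∉ (K.chainsOn R (j + 2) W).map (K.bdry R (j + 1))) : 2 * j + 2 ≤ W.card := by
  obtain ⟨n, hn⟩ : ∃ n, W.card = n := ⟨_, rfl⟩
  induction n using Nat.strong_induction_on generalizing W j z with
  | _ n ih =>
  have hz0 : z ≠ 0 := fun h => hnb (h ▸ zero_mem _)
  obtain ⟨F, hF⟩ := exists_coeff_ne_zero hz0
  cases j with
  | zero => exact two_le_card_of_mem_cycles_zero hz hzW hz0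
  | succ m =>
  obtain ⟨v, hvF⟩ : F.Nonempty := by
    rw [← card_pos, card_eq_of_coeff_ne_zero hF]; omega
  have hvW : v ∈ W := mem_chainsOn.1 hzW F hF hvF
  set N := {x ∈ W | K.skeleton.Adj v x}
  have hvN : v ∉ N := fun h => ((mem_filter.1 h).2).ne rfl
  have hNW : N ⊆ W.erase v := fun x hx =>
    mem_erase.2 ⟨fun h => hvN (h ▸ hx), (mem_filter.1 hx).1⟩
  have hNcard := card_le_card hNW
  have hcard := card_erase_of_mem hvW
  have hWpos := card_pos.2 ⟨v, hvW⟩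
  by_cases hlink : link v z ∈ (K.chainsOn R (m + 2) N).map (K.bdry R (m + 1))
  · obtain ⟨w, hw, hbw⟩ := hlink
    have hcyc : z + K.bdry R (m + 2) (cone v w) ∈ K.cycles R (m + 1) := by
      rw [mem_cycles, map_add, mem_cycles.1 hz, bdry_bdry, add_zero]
    have := ih _ (by omega) hcyc (hflag.add_bdry_cone_mem_chainsOn_erase hvW hzW hw hbw)
      (add_bdry_notMem_map_bdry (erase_subset v W) hnb
        (chainsOn_mono (insert_subset hvW (hNW.trans (erase_subset v W)))
          (cone_mem_chainsOn hw v))) rfl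
    omega
  · have hlinkcyc : link v z ∈ K.cycles R m := by
      rw [mem_cycles, bdry_link, mem_cycles.1 hz, link_zero, neg_zero]
    have hN : 2 * m + 2 ≤ N.card :=
      ih N.card (by omega) hlinkcyc (link_mem_chainsOn hzW v) hlink rfl
    obtain ⟨x, hxW, hxN⟩ := not_subset.1 fun hWN =>
      hnb (hflag.mem_map_bdry_of_subset_insert hvW hWN hz hzW)
    have := card_le_card (insert_subset hxW (insert_subset hvW (hNW.trans (erase_subset v W))))
    rw [card_insert_of_notMem hxN, card_insert_of_notMem hvN] at this
    omega

lemma bddAbove_faceCards (K : SComplex V) : BddAbove {n | ∃ F ∈ K.faces, F.card = n} := by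
  refine ⟨Fintype.card V, ?_⟩
  rintro _ ⟨F, -, rfl⟩
  exact card_le_univ F

lemma card_le_dimP1 {F : Finset V} (hF : F ∈ K.faces) : F.card ≤ K.dimP1 :=
  le_csSup K.bddAbove_faceCards ⟨F, hF, rfl⟩

lemma exists_card_eq_dimP1 (K : SComplex V) : ∃ F ∈ K.faces, F.card = K.dimP1 :=
  Nat.sSup_mem (s := {n | ∃ F ∈ K.faces, F.card = n}) ⟨0, ∅, K.empty_mem, rfl⟩
    K.bddAbove_faceCards

lemma Pure.exists_mem_of_singleton_mem {n : ℕ} (hpure : K.Pure n) {x : V}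
    (hx : {x} ∈ K.faces) : ∃ G ∈ K.faces, x ∈ G ∧ G.card = n := by
  obtain ⟨G, hG, hxG, hcard⟩ := hpure {x} hx
  exact ⟨G, hG, singleton_subset_iff.1 hxG, hcard⟩

def filterFaces (p : Finset V → Prop) (z : K.chains R j) : K.chains R j :=
  chainOfFun fun F => if p F then coeff z F else 0

lemma coeff_filterFaces (p : Finset V → Prop) (z : K.chains R j) (F : Finset V) :
    coeff (filterFaces p z) F = if p F then coeff z F else 0 := by
  rw [filterFaces, coeff_chainOfFun]
  split_ifs with hF hp
  · rfl
  · rfl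
  · rw [coeff, dif_neg hF]
  · rfl

lemma bdry_filterFaces_mem_chainsOn {ζ : K.chains R (j + 1)} (hζ : ζ ∈ K.cycles R j)
    {S : Finset V} {A : Set V} (hA : ∀ F ∈ K.faces, ∀ x ∈ F, ∀ y ∈ F, x ∈ A → y ∉ S → y ∈ A) :
    K.bdry R j (filterFaces (fun F => ∃ x ∈ F, x ∈ A) ζ) ∈ K.chainsOn R j S := by
  refine mem_chainsOn.2 fun τ hτ => ?_
  by_contra hτS
  obtain ⟨t, htτ, htS⟩ := not_subset.1 hτS
  refine hτ ?_
  rw [coeff_bdry]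
  by_cases ht : t ∈ A
  · calc _ = coeff (K.bdry R j ζ) τ := by
          rw [coeff_bdry]
          refine sum_congr rfl fun x _ => ?_
          rw [coeff_filterFaces, if_pos ⟨t, mem_insert_of_mem htτ, ht⟩]
      _ = 0 := by rw [mem_cycles.1 hζ, coeff_zero]
  · refine sum_eq_zero fun x _ => ?_
    rw [coeff_filterFaces]
    by_cases hface : insert x τ ∈ K.faces
    · rw [if_neg fun ⟨y, hy, hyA⟩ => ht (hA _ hface y hy t (mem_insert_of_mem htτ) hyA htS),
        mul_zero]
    · rw [coeff_eq_zero_of_notMem_faces _ hface, ite_self, mul_zero]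

theorem IsMinimalCycle.two_mul_add_four_le_card (hflag : K.IsFlag)
    (hmin : K.IsMinimalCycle R (j + 1)) : 2 * j + 4 ≤ Fintype.card V := by
  obtain ⟨hdim, -, ζ, hζ, hfull, -⟩ := hmin
  obtain ⟨F, hF, hFcard⟩ := K.exists_card_eq_dimP1
  have hζ0 : ζ ≠ 0 := fun h => hfull ⟨F, hF, hFcard.trans hdim⟩ (by rw [h]; rfl)
  have hnb : ζ ∉ (K.chainsOn R (j + 3) univ).map (K.bdry R (j + 2)) := by
    rintro ⟨u, -, hu⟩
    have hu0 : u = 0 := chains_ext fun G => by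
      by_cases hG : G ∈ K.faces
      · have := card_le_dimP1 hG
        rw [coeff_zero, coeff_eq_zero_of_card_ne]
        omega
      · rw [coeff_zero, coeff_eq_zero_of_notMem_faces _ hG]
    exact hζ0 (by rw [← hu, hu0, map_zero])
  have := hflag.two_mul_add_two_le_card_of_notMem_map_bdry hζ
    (mem_chainsOn.2 fun _ _ => subset_univ _) hnb
  rw [card_univ] at this
  omega

theorem IsMinimalCycle.two_mul_add_two_le_card_of_separates [NoZeroDivisors R]
    (hflag : K.IsFlag) (hmin : K.IsMinimalCycle R (j + 1)) {S : Finset V} {A : Set V}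
    (hA : ∀ F ∈ K.faces, ∀ x ∈ F, ∀ y ∈ F, x ∈ A → y ∉ S → y ∈ A) {a b : V}
    (ha : a ∈ A) (haS : a ∉ S) (hb : b ∉ A) (hbS : b ∉ S) : 2 * j + 2 ≤ S.card := by
  obtain ⟨-, hpure, ζ, hζ, hfull, huniq⟩ := hmin
  have hfull' : ∀ G ∈ K.faces, G.card = j + 2 → coeff ζ G ≠ 0 := fun G hG hcard => by
    rw [coeff_val ζ ⟨G, hG, hcard⟩]; exact hfull _
  set ζA := filterFaces (fun F => ∃ x ∈ F, x ∈ A) ζ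
  refine hflag.two_mul_add_two_le_card_of_notMem_map_bdry (bdry_bdry ζA)
    (bdry_filterFaces_mem_chainsOn hζ hA) ?_
  rintro ⟨u, hu, hbu⟩
  obtain ⟨c, hc⟩ := huniq (ζA - u) (by rw [mem_cycles, map_sub, hbu, sub_self])
  have hcoeff : ∀ G, coeff ζA G - coeff u G = c * coeff ζ G := fun G => by
    rw [← coeff_sub, hc, coeff_smul]
  have hu0 : ∀ x ∉ S, ∀ G, x ∈ G → coeff u G = 0 := fun x hxS G hxG =>
    by_contra fun h => hxS (mem_chainsOn.1 hu G h hxG)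
  obtain ⟨Gb, hGb, hbG, hGbcard⟩ := hpure.exists_mem_of_singleton_mem (hflag.singleton_mem_faces b)
  obtain ⟨Ga, hGa, haG, hGacard⟩ := hpure.exists_mem_of_singleton_mem (hflag.singleton_mem_faces a)
  have hc0 : c = 0 := by
    have h := hcoeff Gb
    rw [coeff_filterFaces, if_neg fun ⟨y, hy, hyA⟩ => hb (hA _ hGb y hy b hbG hyA hbS),
      hu0 b hbS Gb hbG, sub_zero, eq_comm, mul_eq_zero] at h
    exact h.resolve_right (hfull' Gb hGb hGbcard)
  have h := hcoeff Ga
  rw [coeff_filterFaces, if_pos ⟨a, haG, ha⟩, hu0 a haS Ga haG, sub_zero, hc0, zero_mul] at h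
  exact hfull' Ga hGa hGacard h

theorem IsMinimalCycle.skeleton_induce_connected [NoZeroDivisors R] (hflag : K.IsFlag)
    (hmin : K.IsMinimalCycle R (j + 1)) (S : Finset V) (hS : S.card < 2 * j + 2) :
    (K.skeleton.induce ((↑S : Set V)ᶜ)).Connected := by
  have hV := hmin.two_mul_add_four_le_card hflag
  obtain ⟨x, hx⟩ : ∃ x, x ∉ S := by
    by_contra! h
    have := card_le_card fun y (_ : y ∈ univ) => h y
    rw [card_univ] at this
    omega
  rw [SimpleGraph.connected_iff]
  refine ⟨fun a b => ?_, ⟨⟨x, hx⟩⟩⟩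
  by_contra hab
  let A : Set V := {y | ∃ hy : y ∉ S, (K.skeleton.induce ((↑S : Set V)ᶜ)).Reachable a ⟨y, hy⟩}
  have hA : ∀ F ∈ K.faces, ∀ x ∈ F, ∀ y ∈ F, x ∈ A → y ∉ S → y ∈ A := by
    rintro F hF x hxF y hyF ⟨hxS, hr⟩ hyS
    refine ⟨hyS, hr.trans ?_⟩
    rcases eq_or_ne x y with rfl | hxy
    · rfl
    · exact SimpleGraph.Adj.reachable ⟨hxy,
        K.down_closed hF (insert_subset hxF (singleton_subset_iff.2 hyF))⟩
  exact hS.not_ge (hmin.two_mul_add_two_le_card_of_separates hflag hA ⟨a.2, .rfl⟩ a.2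
    (fun ⟨_, hr⟩ => hab hr) b.2)

end SComplex

end

theorem stmt17_general (k : Type) [Field k] {V : Type} [Fintype V] [LinearOrder V]
    (K : SComplex V) (d : ℕ)
    (hflag : K.IsFlag) (hmin : K.IsMinimalCycle k (d - 1)) :
    KConn K.skeleton (2 * d - 2) := by
  rcases lt_or_ge d 2 with hd | hd
  · exact ⟨by omega, fun S hS => by omega⟩
  obtain ⟨j, rfl⟩ := Nat.exists_eq_add_of_le' hd
  have hV := hmin.two_mul_add_four_le_card hflag
  exact ⟨by omega, fun S hS => hmin.skeleton_induce_connected hflag S (by omega)⟩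

/-- Let `Δ` be a flag `(d-1)`-dimensional minimal cycle (over a field `k`), on the
full vertex set.  Then the 1-skeleton of `Δ` is `(2d - 2)`-connected. -/
theorem stmt17 (k : Type) [Field k] {V : Type} [Fintype V] [LinearOrder V]
    (K : SComplex V) (d : ℕ) (hd : 1 ≤ d)
    (hv : ∀ v : V, ({v} : Finset V) ∈ K.faces)
    (hflag : K.IsFlag) (hmin : K.IsMinimalCycle k (d - 1)) :
    KConn K.skeleton (2 * d - 2) :=
  stmt17_general k K d hflag hmin
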